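/- Given the LST f_D*(s) = (1-ρ-ρ⁺)·s·f_H(s)/(φ(s) - λ + λ·f_H(s)) of the stationary system delay, its negative derivative at 0 (the mean delay) equals E[D] = (λ·E[H²] + λ⁺·E[(H⁺)²]) / (2(1-ρ-ρ⁺)) + E[H]. -/

import Mathlib

open MeasureTheory ProbabilityTheory Filter Set Topology Real

/-!
For `s > 0` the factor `s` cancels: `f_D*(s) = (1-ρ-ρ⁺) f_H(s) / N(s)` with
`N(s) = 1 - λ (1 - f_H(s))/s - λ⁺ (1 - f_{H⁺}(s))/s`, so `-f_D*'` follows from the quotient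
rule. As `s → 0+`, dominated convergence, with the bounds `0 ≤ 1 - e^{-x} ≤ x` and
`0 ≤ 1 - e^{-x} - x e^{-x} ≤ x²/2` for `x ≥ 0`, gives `(1 - f_T(s))/s → E[T]` and
`-d/ds ((1 - f_T(s))/s) → E[T²]/2`; hence `N → 1-ρ-ρ⁺` and `N' → (λ E[H²] + λ⁺ E[(H⁺)²])/2`.
-/

lemma nonneg_of_hasDerivAt_nonneg {u u' : ℝ → ℝ} (hu : ∀ x, HasDerivAt u (u' x) x)
    (h0 : u 0 = 0) (hu' : ∀ x, 0 ≤ x → 0 ≤ u' x) {x : ℝ} (hx : 0 ≤ x) : 0 ≤ u x := by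
  have hmono : MonotoneOn u (Ici 0) :=
    monotoneOn_of_hasDerivWithinAt_nonneg (convex_Ici 0)
      (fun y _ => (hu y).continuousAt.continuousWithinAt)
      (fun y _ => (hu y).hasDerivWithinAt)
      (fun y hy => hu' y (interior_subset hy))
  exact h0 ▸ hmono self_mem_Ici hx hx

lemma hasDerivAt_one_sub_exp_neg_sub_mul_exp_neg (x : ℝ) :
    HasDerivAt (fun x => 1 - exp (-x) - x * exp (-x)) (x * exp (-x)) x := by
  have hexp : HasDerivAt (fun x => exp (-x)) (-exp (-x)) x := by
    simpa using (hasDerivAt_neg x).exp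
  exact (((hasDerivAt_const x 1).sub hexp).sub ((hasDerivAt_id' x).mul hexp)).congr_deriv
    (by ring)

lemma one_sub_exp_neg_sub_mul_exp_neg_le {x : ℝ} (hx : 0 ≤ x) :
    1 - exp (-x) - x * exp (-x) ≤ x ^ 2 / 2 := by
  have hu : ∀ y, HasDerivAt (fun y => y ^ 2 / 2 - (1 - exp (-y) - y * exp (-y)))
      (y * (1 - exp (-y))) y := fun y =>
    (((hasDerivAt_pow 2 y).div_const 2).sub
      (hasDerivAt_one_sub_exp_neg_sub_mul_exp_neg y)).congr_deriv (by push_cast; ring)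
  exact sub_nonneg.1 (nonneg_of_hasDerivAt_nonneg hu (by simp) (fun y hy => mul_nonneg hy
    (sub_nonneg.2 (exp_le_one_iff.2 (neg_nonpos.2 hy)))) hx)

lemma sq_mul_exp_neg_div_two_le {x : ℝ} (hx : 0 ≤ x) :
    x ^ 2 * exp (-x) / 2 ≤ 1 - exp (-x) - x * exp (-x) := by
  have hu : ∀ y, HasDerivAt (fun y => 1 - exp (-y) - y * exp (-y) - y ^ 2 * exp (-y) / 2)
      (y ^ 2 * exp (-y) / 2) y := fun y => by
    have hexp : HasDerivAt (fun x => exp (-x)) (-exp (-y)) y := by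
      simpa using (hasDerivAt_neg y).exp
    exact ((hasDerivAt_one_sub_exp_neg_sub_mul_exp_neg y).sub
      (((hasDerivAt_pow 2 y).mul hexp).div_const 2)).congr_deriv (by push_cast; ring)
  exact sub_nonneg.1 (nonneg_of_hasDerivAt_nonneg hu (by simp) (fun y _ => by positivity) hx)

lemma exp_mul_le_one_of_nonpos {t : ℝ} (ht : t ≤ 0) {x : ℝ} (hx : 0 ≤ x) : exp (t * x) ≤ 1 :=
  exp_le_one_iff.2 (mul_nonpos_of_nonpos_of_nonneg ht hx)

lemma tendsto_one_sub_exp_neg_mul_div (h : ℝ) :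
    Tendsto (fun s => (1 - exp (-s * h)) / s) (𝓝[>] 0) (𝓝 h) := by
  have hd : HasDerivAt (fun s => exp (-s * h)) (-h) 0 := by
    simpa using ((hasDerivAt_neg' 0).mul_const h).exp
  simpa [div_eq_inv_mul, mul_sub] using hd.tendsto_slope_zero_right.neg

lemma tendsto_one_sub_exp_neg_mul_sub_mul_div_sq {h : ℝ} (hh : 0 ≤ h) :
    Tendsto (fun s => (1 - exp (-s * h) - s * (h * exp (-s * h))) / s ^ 2) (𝓝[>] 0)
      (𝓝 (h ^ 2 / 2)) := by
  have hlow : Tendsto (fun s => h ^ 2 * exp (-s * h) / 2) (𝓝[>] 0) (𝓝 (h ^ 2 / 2)) := by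
    have : Continuous (fun s => h ^ 2 * exp (-s * h) / 2) := by fun_prop
    simpa using (this.tendsto 0).mono_left nhdsWithin_le_nhds
  refine tendsto_of_tendsto_of_tendsto_of_le_of_le' hlow tendsto_const_nhds ?_ ?_
  all_goals
    filter_upwards [self_mem_nhdsWithin] with s (hs : 0 < s)
    have hsh : 0 ≤ s * h := mul_nonneg hs.le hh
    simp only [neg_mul, ← mul_assoc]
  · rw [le_div_iff₀ (by positivity)]
    calc h ^ 2 * exp (-(s * h)) / 2 * s ^ 2 = (s * h) ^ 2 * exp (-(s * h)) / 2 := by ring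
      _ ≤ _ := sq_mul_exp_neg_div_two_le hsh
  · rw [div_le_iff₀ (by positivity)]
    calc _ ≤ (s * h) ^ 2 / 2 := one_sub_exp_neg_sub_mul_exp_neg_le hsh
      _ = h ^ 2 / 2 * s ^ 2 := by ring

namespace ProbabilityTheory

variable {Ω : Type*} [MeasurableSpace Ω] {μ : Measure Ω} {T : Ω → ℝ}

/-- The Laplace–Stieltjes transform `E[e^{-sT}]` is `mgf T μ (-s)`. -/
noncomputable def lstSlope (μ : Measure Ω) (T : Ω → ℝ) (s : ℝ) : ℝ :=
  (1 - mgf T μ (-s)) / s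

/-- The second-order Taylor remainder of the LST at `0`, divided by `s²`. -/
noncomputable def lstRemainder (μ : Measure Ω) (T : Ω → ℝ) (s : ℝ) : ℝ :=
  (1 - mgf T μ (-s) - s * ∫ ω, T ω * exp (-s * T ω) ∂μ) / s ^ 2

lemma integrable_exp_mul_of_nonpos [IsFiniteMeasure μ] (hT : AEStronglyMeasurable T μ)
    (hT0 : ∀ ω, 0 ≤ T ω) {t : ℝ} (ht : t ≤ 0) : Integrable (fun ω => exp (t * T ω)) μ := by
  refine (integrable_const 1).mono' (continuous_exp.comp_aestronglyMeasurable (hT.const_mul t))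
    (ae_of_all _ fun ω => ?_)
  rw [norm_of_nonneg (exp_pos _).le]
  exact exp_mul_le_one_of_nonpos ht (hT0 ω)

lemma integrable_mul_exp_mul_of_nonpos (hTi : Integrable T μ) (hT0 : ∀ ω, 0 ≤ T ω) {t : ℝ}
    (ht : t ≤ 0) : Integrable (fun ω => T ω * exp (t * T ω)) μ := by
  refine hTi.mul_bdd (c := 1)
    (continuous_exp.comp_aestronglyMeasurable (hTi.aestronglyMeasurable.const_mul t))
    (ae_of_all _ fun ω => ?_)
  rw [norm_of_nonneg (exp_pos _).le]
  exact exp_mul_le_one_of_nonpos ht (hT0 ω)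

lemma hasDerivAt_mgf_neg [IsFiniteMeasure μ] (hT : AEStronglyMeasurable T μ)
    (hT0 : ∀ ω, 0 ≤ T ω) {s : ℝ} (hs : 0 < s) :
    HasDerivAt (fun s => mgf T μ (-s)) (-∫ ω, T ω * exp (-s * T ω) ∂μ) s := by
  have hIio : Iio 0 ⊆ interior (integrableExpSet T μ) :=
    interior_maximal (fun t ht => integrable_exp_mul_of_nonpos hT hT0 (le_of_lt ht)) isOpen_Iio
  refine ((hasDerivAt_mgf (hIio (neg_lt_zero.2 hs))).comp s (hasDerivAt_neg s)).congr_deriv ?_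
  simp

lemma hasDerivAt_lstSlope [IsFiniteMeasure μ] (hT : AEStronglyMeasurable T μ)
    (hT0 : ∀ ω, 0 ≤ T ω) {s : ℝ} (hs : 0 < s) :
    HasDerivAt (lstSlope μ T) (-lstRemainder μ T s) s := by
  refine (((hasDerivAt_const s 1).sub (hasDerivAt_mgf_neg hT hT0 hs)).div (hasDerivAt_id' s)
    hs.ne').congr_deriv ?_
  simp only [lstRemainder, Pi.sub_apply]
  generalize ∫ ω, T ω * exp (-s * T ω) ∂μ = I
  field_simp
  ring

lemma mgf_neg_eq_one_sub_mul_lstSlope {s : ℝ} (hs : s ≠ 0) :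
    mgf T μ (-s) = 1 - s * lstSlope μ T s := by
  rw [lstSlope, mul_div_cancel₀ _ hs]
  ring

lemma integral_mul_exp_neg_eq {s : ℝ} (hs : s ≠ 0) :
    ∫ ω, T ω * exp (-s * T ω) ∂μ = lstSlope μ T s - s * lstRemainder μ T s := by
  rw [lstSlope, lstRemainder]
  generalize ∫ ω, T ω * exp (-s * T ω) ∂μ = I
  field_simp
  ring

variable [IsProbabilityMeasure μ]

lemma integral_one_sub_exp_neg_mul_div (hT : AEStronglyMeasurable T μ) (hT0 : ∀ ω, 0 ≤ T ω)
    {s : ℝ} (hs : 0 ≤ s) :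
    ∫ ω, (1 - exp (-s * T ω)) / s ∂μ = lstSlope μ T s := by
  rw [integral_div, integral_sub (integrable_const 1)
    (integrable_exp_mul_of_nonpos hT hT0 (neg_nonpos.2 hs))]
  simp [lstSlope, mgf]

lemma integral_one_sub_exp_neg_mul_sub_mul_div_sq (hTi : Integrable T μ) (hT0 : ∀ ω, 0 ≤ T ω)
    {s : ℝ} (hs : 0 ≤ s) :
    ∫ ω, (1 - exp (-s * T ω) - s * (T ω * exp (-s * T ω))) / s ^ 2 ∂μ =
      lstRemainder μ T s := by
  have hexp := integrable_exp_mul_of_nonpos hTi.aestronglyMeasurable hT0 (neg_nonpos.2 hs)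
  have hmul := integrable_mul_exp_mul_of_nonpos hTi hT0 (neg_nonpos.2 hs)
  have hsub : Integrable (fun ω => 1 - exp (-s * T ω)) μ := (integrable_const 1).sub hexp
  rw [integral_div, integral_sub hsub (hmul.const_mul s),
    integral_sub (integrable_const 1) hexp, integral_const_mul]
  simp [lstRemainder, mgf]

lemma tendsto_lstSlope (hTi : Integrable T μ) (hT0 : ∀ ω, 0 ≤ T ω) :
    Tendsto (lstSlope μ T) (𝓝[>] 0) (𝓝 (∫ ω, T ω ∂μ)) := by
  have hT := hTi.aestronglyMeasurable
  refine (tendsto_integral_filter_of_dominated_convergence T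
      (Eventually.of_forall fun s => by fun_prop) ?_ hTi
      (ae_of_all _ fun ω => tendsto_one_sub_exp_neg_mul_div (T ω))).congr' ?_
  · filter_upwards [self_mem_nhdsWithin] with s (hs : 0 < s)
    refine ae_of_all _ fun ω => ?_
    have hlow := exp_mul_le_one_of_nonpos (neg_nonpos.2 hs.le) (hT0 ω)
    have hup := one_sub_le_exp_neg (s * T ω)
    rw [norm_of_nonneg (div_nonneg (sub_nonneg.2 hlow) hs.le), div_le_iff₀ hs]
    rw [neg_mul] at hlow ⊢
    linarith
  · filter_upwards [self_mem_nhdsWithin] with s (hs : 0 < s)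
    exact integral_one_sub_exp_neg_mul_div hT hT0 hs.le

lemma tendsto_lstRemainder (hTi : Integrable T μ) (hT2i : Integrable (fun ω => T ω ^ 2) μ)
    (hT0 : ∀ ω, 0 ≤ T ω) :
    Tendsto (lstRemainder μ T) (𝓝[>] 0) (𝓝 ((∫ ω, T ω ^ 2 ∂μ) / 2)) := by
  have hT := hTi.aestronglyMeasurable
  rw [← integral_div]
  refine (tendsto_integral_filter_of_dominated_convergence (fun ω => T ω ^ 2)
      (Eventually.of_forall fun s => by fun_prop) ?_ hT2i
      (ae_of_all _ fun ω => tendsto_one_sub_exp_neg_mul_sub_mul_div_sq (hT0 ω))).congr' ?_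
  · filter_upwards [self_mem_nhdsWithin] with s (hs : 0 < s)
    refine ae_of_all _ fun ω => ?_
    have hsT : 0 ≤ s * T ω := mul_nonneg hs.le (hT0 ω)
    have hlow := (by positivity : 0 ≤ (s * T ω) ^ 2 * exp (-(s * T ω)) / 2).trans
      (sq_mul_exp_neg_div_two_le hsT)
    have hup := one_sub_exp_neg_sub_mul_exp_neg_le hsT
    simp only [neg_mul, ← mul_assoc] at hlow hup ⊢
    rw [norm_of_nonneg (div_nonneg hlow (by positivity)), div_le_iff₀ (by positivity)]
    linarith
  · filter_upwards [self_mem_nhdsWithin] with s (hs : 0 < s)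
    exact integral_one_sub_exp_neg_mul_sub_mul_div_sq hTi hT0 hs.le

lemma tendsto_mgf_neg (hTi : Integrable T μ) (hT0 : ∀ ω, 0 ≤ T ω) :
    Tendsto (fun s => mgf T μ (-s)) (𝓝[>] 0) (𝓝 1) := by
  have h := tendsto_const_nhds (x := (1 : ℝ)) |>.sub
    ((tendsto_nhdsWithin_of_tendsto_nhds tendsto_id).mul (tendsto_lstSlope hTi hT0))
  rw [zero_mul, sub_zero] at h
  refine h.congr' ?_
  filter_upwards [self_mem_nhdsWithin] with s (hs : 0 < s)
  exact (mgf_neg_eq_one_sub_mul_lstSlope hs.ne').symm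

lemma tendsto_integral_mul_exp_neg (hTi : Integrable T μ) (hT2i : Integrable (fun ω => T ω ^ 2) μ)
    (hT0 : ∀ ω, 0 ≤ T ω) :
    Tendsto (fun s => ∫ ω, T ω * exp (-s * T ω) ∂μ) (𝓝[>] 0) (𝓝 (∫ ω, T ω ∂μ)) := by
  have h := (tendsto_lstSlope hTi hT0).sub
    ((tendsto_nhdsWithin_of_tendsto_nhds tendsto_id).mul (tendsto_lstRemainder hTi hT2i hT0))
  rw [zero_mul, sub_zero] at h
  refine h.congr' ?_
  filter_upwards [self_mem_nhdsWithin] with s (hs : 0 < s)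
  exact (integral_mul_exp_neg_eq hs.ne').symm

end ProbabilityTheory

lemma tendsto_neg_deriv_of_eq_mul_div {f g gd N N' : ℝ → ℝ} {a c m k : ℝ} (hc : c ≠ 0)
    (hf : ∀ s > 0, f s = c * g s / N s) (hg : ∀ s > 0, HasDerivAt g (-gd s) s)
    (hN : ∀ s > 0, HasDerivAt N (N' s) s) (hga : Tendsto g (𝓝[>] 0) (𝓝 a))
    (hgdm : Tendsto gd (𝓝[>] 0) (𝓝 m)) (hNc : Tendsto N (𝓝[>] 0) (𝓝 c))
    (hN'k : Tendsto N' (𝓝[>] 0) (𝓝 k)) :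
    Tendsto (fun s => -deriv f s) (𝓝[>] 0) (𝓝 (m + a * k / c)) := by
  have hderiv : ∀ᶠ s in 𝓝[>] 0, c * gd s / N s + c * g s * N' s / N s ^ 2 = -deriv f s := by
    filter_upwards [self_mem_nhdsWithin, hNc.eventually_ne hc] with s (hs : 0 < s) hNs
    have hf_nhds : f =ᶠ[𝓝 s] fun s => c * g s / N s :=
      eventually_of_mem (Ioi_mem_nhds hs) fun t ht => hf t ht
    have hquot : HasDerivAt (fun s => c * g s / N s) _ s :=
      ((hg s hs).const_mul c).div (hN s hs) hNs
    rw [hf_nhds.deriv_eq, hquot.deriv]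
    field_simp
    ring
  have hlim := ((hgdm.const_mul c).div hNc hc).add
    (((hga.const_mul c).mul hN'k).div (hNc.pow 2) (pow_ne_zero 2 hc))
  convert hlim.congr' hderiv using 2
  field_simp

theorem stmt7_general {Ω : Type*} [MeasurableSpace Ω] (μ : Measure Ω) [IsProbabilityMeasure μ]
    (H Hp : Ω → ℝ)
    (hHNonneg : ∀ ω, 0 ≤ H ω) (hHpNonneg : ∀ ω, 0 ≤ Hp ω)
    (hHInt : Integrable H μ) (hHpInt : Integrable Hp μ)
    (hH2Int : Integrable (fun ω => (H ω) ^ 2) μ)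
    (hHp2Int : Integrable (fun ω => (Hp ω) ^ 2) μ)
    (lam lamp : ℝ)
    (hstab : lam * (∫ ω, H ω ∂μ) + lamp * (∫ ω, Hp ω ∂μ) < 1)
    (φ fD : ℝ → ℝ)
    (hφ : ∀ s, φ s = s - lamp + lamp * ∫ ω, Real.exp (-s * Hp ω) ∂μ)
    (hfD : ∀ s, fD s =
      (1 - lam * (∫ ω, H ω ∂μ) - lamp * (∫ ω, Hp ω ∂μ)) * s *
          (∫ ω, Real.exp (-s * H ω) ∂μ) /
        (φ s - lam + lam * (∫ ω, Real.exp (-s * H ω) ∂μ))) :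
    Tendsto (fun s => -(deriv fD s)) (𝓝[>] (0:ℝ))
      (𝓝 ((lam * (∫ ω, (H ω) ^ 2 ∂μ) + lamp * (∫ ω, (Hp ω) ^ 2 ∂μ)) /
          (2 * (1 - lam * (∫ ω, H ω ∂μ) - lamp * (∫ ω, Hp ω ∂μ))) +
        (∫ ω, H ω ∂μ))) := by
  have hmgf : ∀ (T : Ω → ℝ) s, ∫ ω, Real.exp (-s * T ω) ∂μ = mgf T μ (-s) := fun _ _ => rfl
  simp only [hmgf] at hφ hfD
  set c := 1 - lam * (∫ ω, H ω ∂μ) - lamp * (∫ ω, Hp ω ∂μ)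
  set N : ℝ → ℝ := fun s => 1 - lam * lstSlope μ H s - lamp * lstSlope μ Hp s
  have hfD_eq : ∀ s > 0, fD s = c * mgf H μ (-s) / N s := fun s hs => by
    have hden : φ s - lam + lam * mgf H μ (-s) = s * N s := by
      simp only [hφ, N, lstSlope]
      field_simp
      ring
    rw [hfD, hden, mul_right_comm, mul_comm s, mul_div_mul_right _ _ hs.ne']
  have hN : ∀ s > 0, HasDerivAt N (lam * lstRemainder μ H s + lamp * lstRemainder μ Hp s) s :=
    fun s hs => (((hasDerivAt_const s 1).sub ((hasDerivAt_lstSlope hHInt.aestronglyMeasurable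
      hHNonneg hs).const_mul lam)).sub ((hasDerivAt_lstSlope hHpInt.aestronglyMeasurable
      hHpNonneg hs).const_mul lamp)).congr_deriv (by ring)
  convert tendsto_neg_deriv_of_eq_mul_div (by linarith) hfD_eq
    (fun s hs => hasDerivAt_mgf_neg hHInt.aestronglyMeasurable hHNonneg hs) hN
    (tendsto_mgf_neg hHInt hHNonneg) (tendsto_integral_mul_exp_neg hHInt hH2Int hHNonneg)
    ((tendsto_const_nhds.sub ((tendsto_lstSlope hHInt hHNonneg).const_mul lam)).sub
      ((tendsto_lstSlope hHpInt hHpNonneg).const_mul lamp))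
    (((tendsto_lstRemainder hHInt hH2Int hHNonneg).const_mul lam).add
      ((tendsto_lstRemainder hHpInt hHp2Int hHpNonneg).const_mul lamp)) using 2
  field_simp
  ring

/-- the negative derivative at `0+` of the system-delay LST
`f_D*(s) = (1-ρ-ρ⁺) s f_H(s)/(φ(s) - λ + λ f_H(s))` equals the mean delay
`E[D] = (λ E[H²] + λ⁺ E[(H⁺)²]) / (2(1-ρ-ρ⁺)) + E[H]`. -/
theorem stmt7 {Ω : Type*} [MeasurableSpace Ω] (μ : Measure Ω) [IsProbabilityMeasure μ]
    (H Hp : Ω → ℝ) (hHMeas : Measurable H) (hHpMeas : Measurable Hp)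
    (hHNonneg : ∀ ω, 0 ≤ H ω) (hHpNonneg : ∀ ω, 0 ≤ Hp ω)
    (hHInt : Integrable H μ) (hHpInt : Integrable Hp μ)
    (hH2Int : Integrable (fun ω => (H ω) ^ 2) μ)
    (hHp2Int : Integrable (fun ω => (Hp ω) ^ 2) μ)
    (lam lamp : ℝ) (hlam : 0 < lam) (hlamp : 0 < lamp)
    (hstab : lam * (∫ ω, H ω ∂μ) + lamp * (∫ ω, Hp ω ∂μ) < 1)
    (φ fD : ℝ → ℝ)
    (hφ : ∀ s, φ s = s - lamp + lamp * ∫ ω, Real.exp (-s * Hp ω) ∂μ)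
    (hfD : ∀ s, fD s =
      (1 - lam * (∫ ω, H ω ∂μ) - lamp * (∫ ω, Hp ω ∂μ)) * s *
          (∫ ω, Real.exp (-s * H ω) ∂μ) /
        (φ s - lam + lam * (∫ ω, Real.exp (-s * H ω) ∂μ))) :
    Tendsto (fun s => -(deriv fD s)) (𝓝[>] (0:ℝ))
      (𝓝 ((lam * (∫ ω, (H ω) ^ 2 ∂μ) + lamp * (∫ ω, (Hp ω) ^ 2 ∂μ)) /
          (2 * (1 - lam * (∫ ω, H ω ∂μ) - lamp * (∫ ω, Hp ω ∂μ))) +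
        (∫ ω, H ω ∂μ))) :=
  stmt7_general μ H Hp hHNonneg hHpNonneg hHInt hHpInt hH2Int hHp2Int lam lamp hstab φ fD hφ hfD
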